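/- arXiv:1501.04398 — 3 statements merged into one kernel-verified Lean document; each statement's English description precedes it below -/
import Mathlib

section
/- Let u be a spectrally extremal vertex of X and suppose u and v are strongly cospectral. Then v is the unique vertex of X at distance d(u,v) from u: if d(u,w) = d(u,v) for some vertex w, then w = v. -/
open Matrix Finset Polynomial

variable {V : Type*}

/-- The eccentricity of a vertex: maximum graph distance to any vertex. -/
noncomputable def ecc [Fintype V] (X : SimpleGraph V) (u : V) : ℕ :=
  Finset.univ.sup fun w => X.dist u w

/-- The standard basis vector of a vertex. -/
def eVec [DecidableEq V] (u : V) : V → ℝ := Pi.single u 1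

/-- `SpectralDecomp X d θ E` : `θ 0 > θ 1 > ... > θ d` are the distinct eigenvalues of the
adjacency matrix of `X` and `E r` is the orthogonal projection onto the `θ r`-eigenspace. -/
structure SpectralDecomp [Fintype V] [DecidableEq V] (X : SimpleGraph V) [DecidableRel X.Adj]
    (d : ℕ) (θ : Fin (d + 1) → ℝ) (E : Fin (d + 1) → Matrix V V ℝ) : Prop where
  decomp : X.adjMatrix ℝ = ∑ r, θ r • E r
  sum_eq_one : ∑ r, E r = 1
  orth : ∀ r s, E r * E s = if r = s then E r else 0
  symm : ∀ r, (E r)ᵀ = E r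
  strict_anti : ∀ r s : Fin (d + 1), r < s → θ s < θ r
  proj_ne_zero : ∀ r, E r ≠ 0

open scoped Classical in
/-- The (index set of the) eigenvalue support of a vertex `u`:
those `r` with `E r * e_u ≠ 0`. -/
noncomputable def suppIdx [Fintype V] [DecidableEq V] {d : ℕ}
    (E : Fin (d + 1) → Matrix V V ℝ) (u : V) : Finset (Fin (d + 1)) :=
  Finset.univ.filter fun r => E r *ᵥ eVec u ≠ 0

/-- The dual degree `d*(u) = |Φ_u| - 1`. -/
noncomputable def dualDeg [Fintype V] [DecidableEq V] {d : ℕ}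
    (E : Fin (d + 1) → Matrix V V ℝ) (u : V) : ℕ :=
  (suppIdx E u).card - 1

/-- A vertex is spectrally extremal if its eccentricity equals its dual degree. -/
noncomputable def SpectrallyExtremal [Fintype V] [DecidableEq V] (X : SimpleGraph V) {d : ℕ}
    (E : Fin (d + 1) → Matrix V V ℝ) (u : V) : Prop :=
  ecc X u = dualDeg E u

/-- Vertices are cospectral if the diagonal entries of all spectral projections agree. -/
def Cospectral [Fintype V] [DecidableEq V] {d : ℕ}
    (E : Fin (d + 1) → Matrix V V ℝ) (u v : V) : Prop :=
  ∀ r, E r u u = E r v v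

/-- Vertices are strongly cospectral if `E r e_u = ± E r e_v` for every `r`. -/
def StronglyCospectral [Fintype V] [DecidableEq V] {d : ℕ}
    (E : Fin (d + 1) → Matrix V V ℝ) (u v : V) : Prop :=
  ∀ r, E r *ᵥ eVec v = E r *ᵥ eVec u ∨ E r *ᵥ eVec v = -(E r *ᵥ eVec u)

/-- `u` and `v` are antipodal vertices: they are cospectral, the distance partition of `u`
coincides with that of `v`, it is pseudo equitable (with respect to a positive Perron
eigenvector), and `{u}`, `{v}` are singleton classes at maximum distance from each other. -/
noncomputable def Antipodal [Fintype V] [DecidableEq V] (X : SimpleGraph V) [DecidableRel X.Adj]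
    {d : ℕ} (θ : Fin (d + 1) → ℝ) (E : Fin (d + 1) → Matrix V V ℝ) (u v : V) : Prop :=
  Cospectral E u v ∧
  -- the two distance partitions have the same classes
  (∀ i : ℕ, i ≤ ecc X u → ∃ j : ℕ, ∀ w, X.dist u w = i ↔ X.dist v w = j) ∧
  (∀ j : ℕ, j ≤ ecc X v → ∃ i : ℕ, ∀ w, X.dist u w = i ↔ X.dist v w = j) ∧
  -- `{u}` and `{v}` are singletons at maximum distance from each other
  X.dist u v = ecc X u ∧ X.dist u v = ecc X v ∧
  (∀ w, X.dist u w = X.dist u v → w = v) ∧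
  (∀ w, X.dist v w = X.dist u v → w = u) ∧
  -- the partition is pseudo equitable with respect to a positive eigenvector
  -- for the largest eigenvalue `θ 0`
  ∃ x : V → ℝ, (∀ w, 0 < x w) ∧ X.adjMatrix ℝ *ᵥ x = θ 0 • x ∧
    ∀ i : ℕ, ∀ w₁ w₂ : V, X.dist u w₁ = X.dist u w₂ →
      ∑ c ∈ Finset.univ.filter (fun c => X.dist u c = i),
          (X.adjMatrix ℝ) w₁ c * x c / x w₁
        = ∑ c ∈ Finset.univ.filter (fun c => X.dist u c = i),
          (X.adjMatrix ℝ) w₂ c * x c / x w₂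

/-- Perfect state transfer from `u` to `v` at time `t`:
`|(exp (i t A))_{v,u}| = 1`. -/
noncomputable def PST [Fintype V] [DecidableEq V] (X : SimpleGraph V) [DecidableRel X.Adj]
    (u v : V) (t : ℝ) : Prop :=
  ‖(NormedSpace.exp ((Complex.I * (t : ℂ)) • X.adjMatrix ℂ)) v u‖ = 1

/-- `X` is distance-regular: there are intersection numbers `a i`, `b i`, `c i` such that
any vertex `w` at distance `i` from `u` has exactly `c i` neighbours at distance `i - 1`
from `u`, `a i` neighbours at distance `i`, and `b i` neighbours at distance `i + 1`. -/
noncomputable def IsDistanceRegular [Fintype V] (X : SimpleGraph V) [DecidableRel X.Adj] :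
    Prop :=
  ∃ a b c : ℕ → ℕ, ∀ (i : ℕ) (u w : V), X.dist u w = i →
    (Finset.univ.filter (fun z => X.Adj w z ∧ X.dist u z + 1 = i)).card = c i ∧
    (Finset.univ.filter (fun z => X.Adj w z ∧ X.dist u z = i)).card = a i ∧
    (Finset.univ.filter (fun z => X.Adj w z ∧ X.dist u z = i + 1)).card = b i

/-!
Strong cospectrality gives signs `σ r` with `E r e_v = σ r • E r e_u`. Interpolating them at the
`|Φ_u| = ε_u + 1` eigenvalues in the support of `u` gives a polynomial `q` of degree at most
`ε_u` with `q(A) e_u = e_v`. Since `(A^j)_{zu}` vanishes for `j < d(u,z)` and is positive for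
`j = d(u,z)`, the entry of `q(A) e_u` at a vertex `z` with `d(u,z) = deg q` is the leading
coefficient of `q` times a positive number. Such vertices exist because `deg q ≤ ε_u`, so every
one of them is `v`; hence `deg q = d(u,v)` and `v` is alone at that distance.
-/

namespace SimpleGraph

section Distance

variable [Fintype V] {X : SimpleGraph V}

lemma Connected.exists_dist_eq_of_le_ecc (hconn : X.Connected) {u : V} {k : ℕ}
    (hk : k ≤ ecc X u) : ∃ z, X.dist u z = k := by
  obtain ⟨w, -, hw⟩ := Finset.exists_mem_eq_sup Finset.univ ⟨u, Finset.mem_univ u⟩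
    fun z => X.dist u z
  obtain ⟨p, hp⟩ := hconn.exists_walk_length_eq_dist u w
  refine ⟨p.getVert k, le_antisymm ?_ ?_⟩
  · exact (dist_le (p.take k)).trans (by simp)
  · have htri := hconn.dist_triangle (u := u) (v := p.getVert k) (w := w)
    have hdrop := dist_le (p.drop k)
    simp only [Walk.drop_length] at hdrop
    unfold ecc at hk
    omega

end Distance

section AdjMatrixPow

variable [Fintype V] [DecidableEq V] {X : SimpleGraph V} [DecidableRel X.Adj]

lemma adjMatrix_pow_apply_eq_zero_of_lt_dist {α : Type*} [Semiring α] {u z : V} {j : ℕ}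
    (hj : j < X.dist u z) : (X.adjMatrix α ^ j) z u = 0 := by
  have no_walk : IsEmpty {p : X.Walk z u | p.length = j} :=
    ⟨fun ⟨p, hp⟩ => hj.not_ge (dist_comm (G := X) ▸ hp ▸ dist_le p)⟩
  rw [adjMatrix_pow_apply_eq_card_walk, Fintype.card_eq_zero_iff.mpr no_walk, Nat.cast_zero]

lemma Reachable.adjMatrix_pow_dist_apply_pos {α : Type*} [Semiring α] [PartialOrder α]
    [IsOrderedRing α] [Nontrivial α] {u z : V} (h : X.Reachable u z) :
    0 < (X.adjMatrix α ^ X.dist u z) z u := by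
  rw [adjMatrix_pow_apply_eq_card_walk, Nat.cast_pos, Fintype.card_pos_iff]
  obtain ⟨p, hp⟩ := h.symm.exists_walk_length_eq_dist
  exact ⟨⟨p, by simpa [dist_comm] using hp⟩⟩

lemma aeval_adjMatrix_apply_of_natDegree_eq_dist {R : Type*} [CommSemiring R] {u z : V}
    {q : R[X]} (hq : q.natDegree = X.dist u z) :
    aeval (X.adjMatrix R) q z u = q.leadingCoeff * (X.adjMatrix R ^ q.natDegree) z u := by
  rw [aeval_eq_sum_range, Finset.sum_range_succ, Matrix.add_apply, Matrix.sum_apply,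
    Finset.sum_eq_zero, zero_add, Matrix.smul_apply, smul_eq_mul, leadingCoeff]
  intro j hj
  rw [Matrix.smul_apply, adjMatrix_pow_apply_eq_zero_of_lt_dist (hq ▸ Finset.mem_range.mp hj),
    smul_zero]

lemma Connected.eq_of_aeval_adjMatrix_mulVec_eq (hconn : X.Connected) {u v w : V}
    {q : ℝ[X]} (hdeg : q.natDegree ≤ ecc X u)
    (hq : aeval (X.adjMatrix ℝ) q *ᵥ eVec u = eVec v) (hw : X.dist u w = X.dist u v) :
    w = v := by
  have hq0 : q ≠ 0 := by
    rintro rfl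
    simpa [eVec] using congrFun hq v
  have top_eq : ∀ z, X.dist u z = q.natDegree → z = v := by
    intro z hz
    have hentry := congrFun hq z
    have hpos : 0 < (X.adjMatrix ℝ ^ q.natDegree) z u :=
      hz ▸ (hconn u z).adjMatrix_pow_dist_apply_pos
    simp only [eVec, Matrix.mulVec_single_one, Matrix.col_apply] at hentry
    rw [aeval_adjMatrix_apply_of_natDegree_eq_dist hz.symm] at hentry
    by_contra hzv
    rw [Pi.single_eq_of_ne hzv] at hentry
    exact mul_ne_zero (leadingCoeff_ne_zero.mpr hq0) hpos.ne' hentry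
  obtain ⟨z, hz⟩ := hconn.exists_dist_eq_of_le_ecc hdeg
  exact top_eq w (hw.trans (top_eq z hz ▸ hz))

end AdjMatrixPow

end SimpleGraph

lemma StronglyCospectral.exists_smul [Fintype V] [DecidableEq V] {d : ℕ}
    {E : Fin (d + 1) → Matrix V V ℝ} {u v : V} (hsc : StronglyCospectral E u v) :
    ∃ σ : Fin (d + 1) → ℝ, ∀ r, E r *ᵥ eVec v = σ r • (E r *ᵥ eVec u) := by
  classical
  refine ⟨fun r => if E r *ᵥ eVec v = E r *ᵥ eVec u then 1 else -1, fun r => ?_⟩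
  dsimp only
  split_ifs with h
  · rw [h, one_smul]
  · rw [(hsc r).resolve_left h, neg_one_smul]

namespace SpectralDecomp

variable [Fintype V] [DecidableEq V] {X : SimpleGraph V} [DecidableRel X.Adj]
  {d : ℕ} {θ : Fin (d + 1) → ℝ} {E : Fin (d + 1) → Matrix V V ℝ}

lemma sum_mulVec (hspec : SpectralDecomp X d θ E) (x : V → ℝ) : ∑ r, E r *ᵥ x = x := by
  rw [← Matrix.sum_mulVec, hspec.sum_eq_one, Matrix.one_mulVec]

lemma adjMatrix_pow (hspec : SpectralDecomp X d θ E) (k : ℕ) :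
    X.adjMatrix ℝ ^ k = ∑ r, θ r ^ k • E r := by
  induction k with
  | zero => simpa using hspec.sum_eq_one.symm
  | succ k ih =>
    rw [pow_succ, ih, hspec.decomp, Finset.sum_mul_sum]
    simp_rw [Matrix.smul_mul, Matrix.mul_smul, hspec.orth, smul_ite, smul_zero, smul_smul]
    simp [pow_succ]

lemma aeval_adjMatrix (hspec : SpectralDecomp X d θ E) (q : ℝ[X]) :
    aeval (X.adjMatrix ℝ) q = ∑ r, q.eval (θ r) • E r := by
  induction q using Polynomial.induction_on' with
  | add p q hp hq => simp [hp, hq, add_smul, Finset.sum_add_distrib]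
  | monomial k a => simp [hspec.adjMatrix_pow, ← Algebra.smul_def, Finset.smul_sum, smul_smul]

lemma exists_aeval_adjMatrix_mulVec_eq (hspec : SpectralDecomp X d θ E) {u v : V}
    (hsc : StronglyCospectral E u v) :
    ∃ q : ℝ[X], q.natDegree ≤ dualDeg E u ∧ aeval (X.adjMatrix ℝ) q *ᵥ eVec u = eVec v := by
  obtain ⟨σ, hσ⟩ := hsc.exists_smul
  have hinj : Set.InjOn θ (suppIdx E u) := StrictAnti.injective hspec.strict_anti |>.injOn
  refine ⟨Lagrange.interpolate (suppIdx E u) θ σ,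
    natDegree_le_of_degree_le (Lagrange.degree_interpolate_le σ hinj), ?_⟩
  rw [hspec.aeval_adjMatrix, Matrix.sum_mulVec, ← hspec.sum_mulVec (eVec v)]
  refine Finset.sum_congr rfl fun r _ => ?_
  rw [Matrix.smul_mulVec, hσ r]
  by_cases hr : r ∈ suppIdx E u
  · rw [Lagrange.eval_interpolate_at_node _ hinj hr]
  · have hzero : E r *ᵥ eVec u = 0 := by simpa [suppIdx] using hr
    simp [hzero]

end SpectralDecomp

variable [Fintype V] [DecidableEq V]

/-- If `u` is spectrally extremal and `u, v` are strongly cospectral,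
then `v` is the unique vertex at distance `d(u,v)` from `u`. -/
theorem stmt_2 (X : SimpleGraph V) [DecidableRel X.Adj] (hconn : X.Connected)
    {d : ℕ} (θ : Fin (d + 1) → ℝ) (E : Fin (d + 1) → Matrix V V ℝ)
    (hspec : SpectralDecomp X d θ E) (u v : V)
    (hext : SpectrallyExtremal X E u) (hsc : StronglyCospectral E u v) :
    ∀ w : V, X.dist u w = X.dist u v → w = v := by
  obtain ⟨q, hdeg, hq⟩ := hspec.exists_aeval_adjMatrix_mulVec_eq hsc
  exact fun w hw => hconn.eq_of_aeval_adjMatrix_mulVec_eq (hdeg.trans hext.ge) hq hw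
end

section
/- If u and v are antipodal vertices of X, then u and v are spectrally extremal vertices and u and v are strongly cospectral. -/
open Matrix Finset Polynomial

variable {V : Type*}

variable [Fintype V] [DecidableEq V]

/-!
Let `x` be the Perron vector, `D = diag x`, and `C_0, …, C_ε` the distance classes from `u`
(`ε = ecc u`). Pseudo-equitability makes the span `M` of the vectors `D 1_{C_i}`
`A`-invariant, and `dim M ≤ ε + 1`. As `C_0 = {u}`, `M` contains `e_u`, hence every
`E_r e_u = p_r(A) e_u`, where `p_r` is the Lagrange basis polynomial of `θ_r` on `Φ_u`; these
`|Φ_u|` mutually orthogonal vectors give `|Φ_u| ≤ ε + 1`. Conversely `ε < |Φ_u|` in any connected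
graph, because `deg p_r = |Φ_u| - 1` and `(A^k)_{wu} = 0` for `k < d(w, u)`. So `M` is spanned by
the `E_r e_u`, and `e_v ∈ M` (as `C_ε = {v}`) forces `E_r e_v = c_r E_r e_u`; cospectrality then
gives `c_r² = 1`.
-/

lemma mulVec_eVec_apply (M : Matrix V V ℝ) (u w : V) : (M *ᵥ eVec u) w = M w u := by
  simp [eVec]

lemma aeval_mulVec_mem {A : Matrix V V ℝ} {M : Submodule ℝ (V → ℝ)}
    (hM : ∀ y ∈ M, A *ᵥ y ∈ M) {y : V → ℝ} (hy : y ∈ M) (p : ℝ[X]) :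
    aeval A p *ᵥ y ∈ M := by
  induction p using Polynomial.induction_on with
  | C a =>
    rw [aeval_C, Algebra.algebraMap_eq_smul_one, smul_mulVec, one_mulVec]
    exact M.smul_mem a hy
  | add p q hp hq => simpa [add_mulVec] using M.add_mem hp hq
  | monomial n a ih =>
    rw [show C a * X ^ (n + 1) = X * (C a * X ^ n) by ring, map_mul, aeval_X, ← mulVec_mulVec]
    exact hM _ ih

lemma sum_smul_mulVec_eVec {d : ℕ} (E : Fin (d + 1) → Matrix V V ℝ) (c : Fin (d + 1) → ℝ)
    (u : V) : (∑ r, c r • E r) *ᵥ eVec u = ∑ r ∈ suppIdx E u, c r • E r *ᵥ eVec u := by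
  simp only [sum_mulVec, smul_mulVec]
  refine (Finset.sum_subset (suppIdx E u).subset_univ fun r _ hr => ?_).symm
  simp_all [suppIdx]

lemma suppIdx_eq_of_stronglyCospectral {d : ℕ} {E : Fin (d + 1) → Matrix V V ℝ} {u v : V}
    (hsc : StronglyCospectral E u v) : suppIdx E v = suppIdx E u := by
  ext r
  rcases hsc r with hr | hr <;> simp [suppIdx, hr]

namespace SimpleGraph

variable {G : SimpleGraph V} [DecidableRel G.Adj] {w u : V}

lemma adjMatrix_pow_apply_eq_zero_of_lt_dist_s6 {α : Type*} [Semiring α] {n : ℕ}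
    (hn : n < G.dist w u) : (G.adjMatrix α ^ n) w u = 0 := by
  have : IsEmpty {p : G.Walk w u | p.length = n} :=
    ⟨fun ⟨p, hp⟩ => absurd (hp ▸ G.dist_le p) (not_le.mpr hn)⟩
  rw [adjMatrix_pow_apply_eq_card_walk, Fintype.card_eq_zero, Nat.cast_zero]

lemma Reachable.adjMatrix_pow_dist_apply_ne_zero {α : Type*} [Semiring α] [CharZero α]
    (hr : G.Reachable w u) : (G.adjMatrix α ^ G.dist w u) w u ≠ 0 := by
  obtain ⟨p, hp⟩ := hr.exists_walk_length_eq_dist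
  rw [adjMatrix_pow_apply_eq_card_walk, Nat.cast_ne_zero, ← Nat.pos_iff_ne_zero,
    Fintype.card_pos_iff]
  exact ⟨⟨p, hp⟩⟩

lemma aeval_adjMatrix_apply_eq_zero_of_natDegree_lt_dist {R : Type*} [CommSemiring R]
    {p : R[X]} (hp : p.natDegree < G.dist w u) : aeval (G.adjMatrix R) p w u = 0 := by
  rw [aeval_eq_sum_range, Matrix.sum_apply]
  refine Finset.sum_eq_zero fun k hk => ?_
  rw [Matrix.smul_apply, adjMatrix_pow_apply_eq_zero_of_lt_dist_s6, smul_zero]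
  exact lt_of_le_of_lt (Nat.lt_succ_iff.mp (Finset.mem_range.mp hk)) hp

end SimpleGraph

namespace SpectralDecomp

variable {X : SimpleGraph V} [DecidableRel X.Adj] {d : ℕ} {θ : Fin (d + 1) → ℝ}
  {E : Fin (d + 1) → Matrix V V ℝ} (h : SpectralDecomp X d θ E)
include h

lemma injective_eigenvalues : Function.Injective θ :=
  StrictAnti.injective fun _ _ => h.strict_anti _ _

lemma sum_smul_mul_sum_smul (a b : Fin (d + 1) → ℝ) :
    (∑ r, a r • E r) * (∑ r, b r • E r) = ∑ r, (a r * b r) • E r := by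
  simp [Finset.sum_mul_sum, h.orth, smul_ite, smul_smul, mul_comm]

lemma aeval_eq (p : ℝ[X]) : aeval (X.adjMatrix ℝ) p = ∑ r, p.eval (θ r) • E r := by
  induction p using Polynomial.induction_on with
  | C a => simp [← Finset.smul_sum, h.sum_eq_one, Algebra.algebraMap_eq_smul_one]
  | add p q hp hq => simp [hp, hq, add_smul, Finset.sum_add_distrib]
  | monomial n a ih =>
    rw [pow_succ, ← mul_assoc, map_mul, ih, aeval_X, h.decomp, h.sum_smul_mul_sum_smul]
    simp [mul_assoc]

lemma proj_mulVec_sum_smul (c : Fin (d + 1) → ℝ) (y : V → ℝ) (r : Fin (d + 1)) :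
    E r *ᵥ ∑ s, c s • E s *ᵥ y = c r • E r *ᵥ y := by
  simp [mulVec_sum, mulVec_smul, mulVec_mulVec, h.orth, apply_ite (· *ᵥ y)]

lemma apply_self_eq_dotProduct (r : Fin (d + 1)) (a : V) :
    E r a a = (E r *ᵥ eVec a) ⬝ᵥ (E r *ᵥ eVec a) := by
  calc E r a a = ((E r)ᵀ * E r) a a := by rw [h.symm, h.orth, if_pos rfl]
    _ = _ := by simp [Matrix.mul_apply, dotProduct, mulVec_eVec_apply]

lemma linearIndepOn_suppIdx (u : V) :
    LinearIndepOn ℝ (fun r => E r *ᵥ eVec u) (suppIdx E u : Set (Fin (d + 1))) := by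
  rw [linearIndepOn_finset_iff]
  intro c hc r hr
  have hzero : ∀ s ∉ suppIdx E u, c s • E s *ᵥ eVec u = 0 := fun s hs => by
    simp_all [suppIdx]
  rw [Finset.sum_subset (suppIdx E u).subset_univ fun s _ hs => hzero s hs] at hc
  have hr' := congrArg (E r *ᵥ ·) hc
  simp only [h.proj_mulVec_sum_smul, mulVec_zero, smul_eq_zero] at hr'
  exact hr'.resolve_right (by simpa [suppIdx] using hr)

lemma card_suppIdx_le_finrank {u : V} {S : Submodule ℝ (V → ℝ)}
    (hS : ∀ r, E r *ᵥ eVec u ∈ S) : #(suppIdx E u) ≤ Module.finrank ℝ S := by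
  have hspan := finrank_span_eq_card (h.linearIndepOn_suppIdx u)
  simp only [Finset.coe_sort_coe, Fintype.card_coe] at hspan
  rw [← hspan]
  refine Submodule.finrank_mono (Submodule.span_le.mpr ?_)
  rintro _ ⟨r, rfl⟩
  exact hS r

lemma proj_mulVec_eVec_eq_aeval_basis {u : V} {r : Fin (d + 1)} (hr : r ∈ suppIdx E u) :
    E r *ᵥ eVec u = aeval (X.adjMatrix ℝ) (Lagrange.basis (suppIdx E u) θ r) *ᵥ eVec u := by
  have hinj : Set.InjOn θ (suppIdx E u) := h.injective_eigenvalues.injOn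
  rw [h.aeval_eq, sum_smul_mulVec_eVec, Finset.sum_eq_single_of_mem r hr fun s hs hsr => ?_,
    Lagrange.eval_basis_self hinj hr, one_smul]
  rw [Lagrange.eval_basis_of_ne hsr.symm hs, zero_smul]

lemma proj_mulVec_eVec_mem {u : V} {M : Submodule ℝ (V → ℝ)}
    (hM : ∀ y ∈ M, X.adjMatrix ℝ *ᵥ y ∈ M) (hu : eVec u ∈ M) (r : Fin (d + 1)) :
    E r *ᵥ eVec u ∈ M := by
  by_cases hr : r ∈ suppIdx E u
  · rw [h.proj_mulVec_eVec_eq_aeval_basis hr]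
    exact aeval_mulVec_mem hM hu _
  · simp_all [suppIdx]

lemma apply_eq_zero_of_card_suppIdx_le_dist {w u : V} (hw : #(suppIdx E u) ≤ X.dist w u)
    (r : Fin (d + 1)) : E r w u = 0 := by
  rw [← mulVec_eVec_apply (E r) u w]
  by_cases hr : r ∈ suppIdx E u
  · rw [h.proj_mulVec_eVec_eq_aeval_basis hr, mulVec_eVec_apply]
    apply SimpleGraph.aeval_adjMatrix_apply_eq_zero_of_natDegree_lt_dist
    rw [Lagrange.natDegree_basis h.injective_eigenvalues.injOn hr]
    have := Finset.card_pos.mpr ⟨r, hr⟩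
    omega
  · simp_all [suppIdx]

lemma ecc_lt_card_suppIdx (hconn : X.Connected) (u : V) : ecc X u < #(suppIdx E u) := by
  obtain ⟨w, -, hw⟩ := Finset.exists_mem_eq_sup Finset.univ ⟨u, Finset.mem_univ u⟩ (X.dist u ·)
  rw [ecc, hw, X.dist_comm]
  by_contra! hle
  apply (hconn w u).adjMatrix_pow_dist_apply_ne_zero (α := ℝ)
  have hpow := h.aeval_eq (Polynomial.X ^ X.dist w u)
  rw [aeval_X_pow] at hpow
  simp [hpow, Matrix.sum_apply, h.apply_eq_zero_of_card_suppIdx_le_dist hle]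

lemma stronglyCospectral_of_mem_span {u v : V} (hcos : Cospectral E u v)
    (hv : eVec v ∈ Submodule.span ℝ (Set.range fun r => E r *ᵥ eVec u)) :
    StronglyCospectral E u v := by
  obtain ⟨c, hc⟩ := (Submodule.mem_span_range_iff_exists_fun ℝ).mp hv
  intro r
  have hvr : E r *ᵥ eVec v = c r • E r *ᵥ eVec u := by
    rw [← hc, h.proj_mulVec_sum_smul]
  by_cases hu : E r u u = 0
  · rw [h.apply_self_eq_dotProduct, dotProduct_self_eq_zero] at hu
    left
    rw [hvr, hu, smul_zero]
  have hdiag : E r u u = c r ^ 2 * E r u u := calc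
    E r u u = E r v v := hcos r
    _ = c r ^ 2 * ((E r *ᵥ eVec u) ⬝ᵥ (E r *ᵥ eVec u)) := by
      rw [h.apply_self_eq_dotProduct, hvr, smul_dotProduct, dotProduct_smul, smul_eq_mul,
        smul_eq_mul, ← mul_assoc, sq]
    _ = c r ^ 2 * E r u u := by rw [h.apply_self_eq_dotProduct]
  have hc : c r ^ 2 = 1 := mul_right_cancel₀ hu (hdiag.symm.trans (one_mul _).symm)
  rcases sq_eq_one_iff.mp hc with hc | hc
  · left
    rw [hvr, hc, one_smul]
  · right
    rw [hvr, hc, neg_one_smul]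

end SpectralDecomp

section DistancePartition

variable (X : SimpleGraph V) (x : V → ℝ) (u : V)

/-- `D 1_{C_i}`, where `C_i` is the `i`-th class of the distance partition from `u` and
`D = diag x`. -/
noncomputable def distClassVec (i : ℕ) : V → ℝ := fun w => if X.dist u w = i then x w else 0

def distClassSpan : Submodule ℝ (V → ℝ) :=
  Submodule.span ℝ (Set.range fun i : Fin (ecc X u + 1) => distClassVec X x u i)

/-- `A w c * x c / x w` is the entry `(D⁻¹ A D)_{w c}`. -/
def IsPseudoEquitableDistPartition [DecidableRel X.Adj] : Prop :=
  ∀ i : ℕ, ∀ w₁ w₂ : V, X.dist u w₁ = X.dist u w₂ →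
    ∑ c ∈ Finset.univ.filter (fun c => X.dist u c = i), (X.adjMatrix ℝ) w₁ c * x c / x w₁
      = ∑ c ∈ Finset.univ.filter (fun c => X.dist u c = i), (X.adjMatrix ℝ) w₂ c * x c / x w₂

variable {X x u}

omit [DecidableEq V] in
lemma dist_le_ecc (w : V) : X.dist u w ≤ ecc X u :=
  Finset.le_sup (f := (X.dist u ·)) (Finset.mem_univ w)

omit [DecidableEq V] in
lemma finrank_distClassSpan_le : Module.finrank ℝ (distClassSpan X x u) ≤ ecc X u + 1 :=
  (finrank_range_le_card _).trans (Fintype.card_fin _).le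

omit [DecidableEq V] in
lemma mul_mem_distClassSpan {f : V → ℝ} (hf : ∀ w w', X.dist u w = X.dist u w' → f w = f w') :
    (fun w => f w * x w) ∈ distClassSpan X x u := by
  have hsum : (fun w => f w * x w)
      = ∑ i : Fin (ecc X u + 1), fun w => if X.dist u w = i then f w * x w else 0 := by
    ext w
    rw [Finset.sum_apply, Finset.sum_eq_single ⟨X.dist u w, Nat.lt_succ_of_le (dist_le_ecc w)⟩]
    · simp
    · intro i _ hi
      rw [if_neg fun h => hi (Fin.ext h.symm)]
    · simp
  rw [hsum]
  refine Submodule.sum_mem _ fun i _ => ?_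
  by_cases hi : ∃ w₀, X.dist u w₀ = i
  · obtain ⟨w₀, hw₀⟩ := hi
    convert (distClassSpan X x u).smul_mem (f w₀) (Submodule.subset_span ⟨i, rfl⟩) using 1
    ext w
    simp only [distClassVec, Pi.smul_apply, smul_eq_mul, mul_ite, mul_zero]
    split_ifs with h
    · rw [hf w w₀ (h.trans hw₀.symm)]
    · rfl
  · convert (distClassSpan X x u).zero_mem using 1
    ext w
    simp only [Pi.zero_apply, ite_eq_right_iff]
    exact fun h => absurd ⟨w, h⟩ hi

omit [DecidableEq V] in
lemma mulVec_mem_distClassSpan [DecidableRel X.Adj] (hx : ∀ w, x w ≠ 0)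
    (hpe : IsPseudoEquitableDistPartition X x u) {y : V → ℝ} (hy : y ∈ distClassSpan X x u) :
    X.adjMatrix ℝ *ᵥ y ∈ distClassSpan X x u := by
  suffices distClassSpan X x u ≤ (distClassSpan X x u).comap (X.adjMatrix ℝ).mulVecLin from
    this hy
  refine Submodule.span_le.mpr ?_
  rintro _ ⟨i, rfl⟩
  have hentry : ∀ w, (X.adjMatrix ℝ *ᵥ distClassVec X x u i) w
      = (∑ c ∈ Finset.univ.filter (fun c => X.dist u c = i), X.adjMatrix ℝ w c * x c / x w)
        * x w := by
    intro w
    rw [← Finset.sum_div, div_mul_cancel₀ _ (hx w), Finset.sum_filter]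
    simp [mulVec, dotProduct, distClassVec, mul_ite]
  simpa [funext hentry] using mul_mem_distClassSpan (x := x) (hpe i)

lemma eVec_mem_distClassSpan {a : V} (hx : x a ≠ 0) {i : ℕ} (hi : i ≤ ecc X u)
    (hclass : ∀ w, X.dist u w = i ↔ w = a) : eVec a ∈ distClassSpan X x u := by
  have hvec : distClassVec X x u i = x a • eVec a := by
    ext w
    by_cases hw : w = a
    · simp [distClassVec, eVec, hw, (hclass a).mpr rfl]
    · simp [distClassVec, eVec, hw, (hclass w).not.mpr hw]
  have hmem := (distClassSpan X x u).smul_mem (x a)⁻¹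
    (Submodule.subset_span ⟨⟨i, Nat.lt_succ_of_le hi⟩, rfl⟩)
  simpa [hvec, smul_smul, inv_mul_cancel₀ hx] using hmem

end DistancePartition

/-- Antipodal vertices are spectrally extremal and strongly cospectral. -/
theorem stmt_6 (X : SimpleGraph V) [DecidableRel X.Adj] (hconn : X.Connected)
    {d : ℕ} (θ : Fin (d + 1) → ℝ) (E : Fin (d + 1) → Matrix V V ℝ)
    (hspec : SpectralDecomp X d θ E) (u v : V)
    (hant : Antipodal X θ E u v) :
    SpectrallyExtremal X E u ∧ SpectrallyExtremal X E v ∧ StronglyCospectral E u v := by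
  obtain ⟨hcos, -, -, hduv, hdvv, hsingu, -, x, hxpos, -, hpe⟩ := hant
  have hx : ∀ w, x w ≠ 0 := fun w => (hxpos w).ne'
  set M := distClassSpan X x u
  have hinv : ∀ y ∈ M, X.adjMatrix ℝ *ᵥ y ∈ M := fun y => mulVec_mem_distClassSpan hx hpe
  have hu : eVec u ∈ M :=
    eVec_mem_distClassSpan (hx u) (Nat.zero_le _) fun w => by rw [hconn.dist_eq_zero_iff, eq_comm]
  have hv : eVec v ∈ M :=
    eVec_mem_distClassSpan (hx v) hduv.le fun w => ⟨hsingu w, fun h => by rw [h]⟩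
  have hEM : ∀ r, E r *ᵥ eVec u ∈ M := hspec.proj_mulVec_eVec_mem hinv hu
  have hcard : #(suppIdx E u) = ecc X u + 1 :=
    le_antisymm ((hspec.card_suppIdx_le_finrank hEM).trans finrank_distClassSpan_le)
      (hspec.ecc_lt_card_suppIdx hconn u)
  have hspan : Submodule.span ℝ (Set.range fun r => E r *ᵥ eVec u) = M :=
    Submodule.eq_of_le_of_finrank_le (Submodule.span_le.mpr (Set.range_subset_iff.mpr hEM))
      (finrank_distClassSpan_le.trans
        (hcard ▸ hspec.card_suppIdx_le_finrank fun r => Submodule.subset_span ⟨r, rfl⟩))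
  have hsc : StronglyCospectral E u v := hspec.stronglyCospectral_of_mem_span hcos (hspan ▸ hv)
  refine ⟨?_, ?_, hsc⟩
  · rw [SpectrallyExtremal, dualDeg, hcard, Nat.add_sub_cancel]
  · rw [SpectrallyExtremal, dualDeg, suppIdx_eq_of_stronglyCospectral hsc, hcard,
      Nat.add_sub_cancel, ← hdvv, hduv]
end

section
/- Suppose X has diameter d and exactly d+1 distinct adjacency eigenvalues θ_0 > ... > θ_d, and suppose X admits perfect state transfer at time τ between vertices u and v with d(u,v) = d. Then for every pair of vertices z, w with d(z,w) = d one has (A^d)_{z,w} ≤ (A^d)_{u,v}, and equality holds if and only if X admits perfect state transfer between z and w at time τ. -/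
open Matrix Finset Polynomial

variable {V : Type*}

variable [Fintype V] [DecidableEq V]

/-! Since `A ^ k = ∑ r, θ r ^ k • E r`, the vector `r ↦ E r z w` has moments
`∑ r, θ r ^ k * E r z w = (A ^ k) z w`, which vanish for `k < dist z w`. Inverting the
Vandermonde matrix of the distinct eigenvalues, `E r z w = (A ^ d) z w * c r` whenever
`dist z w = d`, for a vector `c` depending only on the spectrum. Hence
`exp (i τ A) w z = (A ^ d) z w * ∑ r, exp (i τ θ r) * c r`: between vertices at distance `d`,
the transfer amplitude is one fixed multiple of the number of `d`-walks. These amplitudes are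
at most `1` because `exp (i τ A)` is unitary, and perfect state transfer from `u` to `v` says
that the multiple for `(u, v)` is exactly `1`. -/

theorem Matrix.exists_eq_smul_of_sum_pow_mul_eq_zero {K : Type*} [Field K] {n : ℕ}
    {θ : Fin (n + 1) → K} (hθ : Function.Injective θ) :
    ∃ c : Fin (n + 1) → K, ∀ x : Fin (n + 1) → K,
      (∀ k < n, ∑ r, θ r ^ k * x r = 0) → x = (∑ r, θ r ^ n * x r) • c := by
  set W := (vandermonde θ)ᵀ
  have hW : IsUnit W.det := by
    rw [det_transpose]
    exact (det_vandermonde_ne_zero_iff.mpr hθ).isUnit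
  refine ⟨W⁻¹ *ᵥ Pi.single (Fin.last n) 1, fun x hx => ?_⟩
  have hWx : W *ᵥ x = (∑ r, θ r ^ n * x r) • Pi.single (Fin.last n) 1 := by
    ext k
    simp only [W, mulVec, dotProduct, transpose_apply, vandermonde_apply, Pi.smul_apply,
      smul_eq_mul]
    by_cases hk : k = Fin.last n
    · simp [hk]
    · rw [Pi.single_eq_of_ne hk, mul_zero]
      exact hx k (Fin.val_lt_last hk)
  rw [← mulVec_smul, ← hWx, mulVec_mulVec, nonsing_inv_mul _ hW, one_mulVec]

theorem SimpleGraph.adjMatrix_pow_apply_eq_zero_of_lt_dist_s17 {α : Type*} [Semiring α]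
    (G : SimpleGraph V) [DecidableRel G.Adj] {k : ℕ} {z w : V} (h : k < G.dist z w) :
    (G.adjMatrix α ^ k) z w = 0 := by
  rw [adjMatrix_pow_apply_eq_card_walk, Fintype.card_eq_zero_iff.mpr, Nat.cast_zero]
  exact ⟨fun p => (h.trans_le (dist_le p.1)).ne' p.2⟩

theorem SimpleGraph.adjMatrix_pow_apply_nonneg {α : Type*} [Semiring α] [PartialOrder α]
    [IsOrderedRing α] (G : SimpleGraph V) [DecidableRel G.Adj] (k : ℕ) (z w : V) :
    0 ≤ (G.adjMatrix α ^ k) z w := by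
  rw [adjMatrix_pow_apply_eq_card_walk]
  exact Nat.cast_nonneg _

theorem CompleteOrthogonalIdempotents.sum_smul_pow {R 𝔸 ι : Type*} [CommSemiring R]
    [Semiring 𝔸] [Algebra R 𝔸] [Fintype ι] {e : ι → 𝔸} (he : CompleteOrthogonalIdempotents e)
    (μ : ι → R) (k : ℕ) : (∑ i, μ i • e i) ^ k = ∑ i, μ i ^ k • e i := by
  classical
  induction k with
  | zero => simp [he.complete]
  | succ k ih =>
    simp_rw [pow_succ, ih, Finset.sum_mul_sum, smul_mul_smul, he.mul_eq, smul_ite, smul_zero,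
      Finset.sum_ite_eq, Finset.mem_univ, if_true]

theorem CompleteOrthogonalIdempotents.exp_sum_smul {𝔸 ι : Type*} [Ring 𝔸] [Algebra ℂ 𝔸]
    [TopologicalSpace 𝔸] [IsTopologicalRing 𝔸] [ContinuousSMul ℂ 𝔸] [T2Space 𝔸] [Fintype ι]
    {e : ι → 𝔸} (he : CompleteOrthogonalIdempotents e) (μ : ι → ℂ) :
    NormedSpace.exp (∑ i, μ i • e i) = ∑ i, Complex.exp (μ i) • e i := by
  have hterm : ∀ i, HasSum (fun k : ℕ => ((k.factorial⁻¹ : ℂ) * μ i ^ k) • e i)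
      (Complex.exp (μ i) • e i) := fun i => by
    simpa only [Complex.exp_eq_exp_ℂ, smul_eq_mul] using
      (NormedSpace.exp_series_hasSum_exp' (𝕂 := ℂ) (μ i)).smul_const (e i)
  rw [NormedSpace.exp_eq_tsum ℂ]
  refine HasSum.tsum_eq ?_
  simp_rw [he.sum_smul_pow, Finset.smul_sum, smul_smul]
  exact hasSum_sum fun i _ => hterm i

theorem Matrix.IsHermitian.exp_I_mul_smul_mem_unitaryGroup {n : Type*} [Fintype n]
    [DecidableEq n] {A : Matrix n n ℂ} (hA : A.IsHermitian) (t : ℝ) :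
    NormedSpace.exp ((Complex.I * t) • A) ∈ unitaryGroup n ℂ := by
  have hskew : ((Complex.I * t) • A)ᴴ = -((Complex.I * t) • A) := by
    rw [conjTranspose_smul, hA.eq, star_mul', Complex.star_def, Complex.conj_I,
      Complex.conj_ofReal, neg_mul, neg_smul]
  have hdet : IsUnit (NormedSpace.exp ((Complex.I * t) • A)).det :=
    (isUnit_iff_isUnit_det _).mp (isUnit_exp _)
  rw [mem_unitaryGroup_iff', star_eq_conjTranspose, ← exp_conjTranspose, hskew, exp_neg,
    nonsing_inv_mul _ hdet]

namespace SpectralDecomp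

variable {X : SimpleGraph V} [DecidableRel X.Adj] {d : ℕ} {θ : Fin (d + 1) → ℝ}
  {E : Fin (d + 1) → Matrix V V ℝ}

theorem completeOrthogonalIdempotents (hspec : SpectralDecomp X d θ E) :
    CompleteOrthogonalIdempotents E :=
  ⟨OrthogonalIdempotents.iff_mul_eq.mpr hspec.orth, hspec.sum_eq_one⟩

theorem adjMatrix_pow_apply (hspec : SpectralDecomp X d θ E) (k : ℕ) (z w : V) :
    (X.adjMatrix ℝ ^ k) z w = ∑ r, θ r ^ k * E r z w := by
  rw [hspec.decomp, hspec.completeOrthogonalIdempotents.sum_smul_pow]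
  simp [Matrix.sum_apply]

theorem exists_apply_eq_adjMatrix_pow_apply_mul (hspec : SpectralDecomp X d θ E) :
    ∃ c : Fin (d + 1) → ℝ, ∀ z w, X.dist z w = d → ∀ r,
      E r z w = (X.adjMatrix ℝ ^ d) z w * c r := by
  obtain ⟨c, hc⟩ := exists_eq_smul_of_sum_pow_mul_eq_zero
    (StrictAnti.injective fun r s hrs => hspec.strict_anti r s hrs)
  refine ⟨c, fun z w hzw r => ?_⟩
  have hmoments : ∀ k < d, ∑ r, θ r ^ k * E r z w = 0 := fun k hk => by
    rw [← hspec.adjMatrix_pow_apply]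
    exact X.adjMatrix_pow_apply_eq_zero_of_lt_dist_s17 (hzw ▸ hk)
  rw [congrFun (hc _ hmoments) r, ← hspec.adjMatrix_pow_apply, Pi.smul_apply, smul_eq_mul]

theorem exp_adjMatrix_apply (hspec : SpectralDecomp X d θ E) (t : ℝ) (z w : V) :
    NormedSpace.exp ((Complex.I * t) • X.adjMatrix ℂ) z w
      = ∑ r, Complex.exp (Complex.I * t * θ r) * E r z w := by
  let f : Matrix V V ℝ →+* Matrix V V ℂ := (algebraMap ℝ ℂ).mapMatrix
  have hA : (Complex.I * t) • X.adjMatrix ℂ = ∑ r, (Complex.I * t * θ r) • f (E r) := by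
    ext a b
    have h := congrFun (congrFun hspec.decomp a) b
    simp only [Matrix.sum_apply, Matrix.smul_apply, smul_eq_mul] at h
    simp only [Matrix.smul_apply, Matrix.sum_apply, smul_eq_mul, f, RingHom.mapMatrix_apply,
      Matrix.map_apply]
    have hcast : X.adjMatrix ℂ a b = (X.adjMatrix ℝ a b : ℂ) := by
      by_cases hab : X.Adj a b <;> simp [hab]
    rw [hcast, h, Complex.ofReal_sum, Finset.mul_sum]
    simp only [Complex.ofReal_mul, Complex.coe_algebraMap, mul_assoc]
  have hexp := (hspec.completeOrthogonalIdempotents.map f).exp_sum_smul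
    fun r => Complex.I * t * θ r
  simp only [Function.comp_apply] at hexp
  rw [hA, hexp]
  simp [Matrix.sum_apply, f]

theorem exists_norm_exp_adjMatrix_apply_eq (hspec : SpectralDecomp X d θ E) (t : ℝ) :
    ∃ s : ℝ, ∀ z w, X.dist z w = d →
      ‖NormedSpace.exp ((Complex.I * t) • X.adjMatrix ℂ) w z‖
        = (X.adjMatrix ℝ ^ d) z w * s := by
  obtain ⟨c, hc⟩ := hspec.exists_apply_eq_adjMatrix_pow_apply_mul
  set S : ℂ := ∑ r, Complex.exp (Complex.I * t * θ r) * c r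
  refine ⟨‖S‖, fun z w hzw => ?_⟩
  have hentry : NormedSpace.exp ((Complex.I * t) • X.adjMatrix ℂ) w z
      = (X.adjMatrix ℝ ^ d) z w * S := by
    rw [hspec.exp_adjMatrix_apply, Finset.mul_sum]
    refine Finset.sum_congr rfl fun r _ => ?_
    rw [← transpose_apply (E r), hspec.symm, hc z w hzw r]
    push_cast
    ring
  rw [hentry, norm_mul, Complex.norm_real,
    Real.norm_of_nonneg (X.adjMatrix_pow_apply_nonneg d z w)]

end SpectralDecomp

theorem stmt_17_general (X : SimpleGraph V) [DecidableRel X.Adj] (d : ℕ)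
    (θ : Fin (d + 1) → ℝ) (E : Fin (d + 1) → Matrix V V ℝ)
    (hspec : SpectralDecomp X d θ E)
    (u v : V) (huv : X.dist u v = d) (τ : ℝ) (hpst : PST X u v τ) :
    ∀ z w : V, X.dist z w = d →
      ((X.adjMatrix ℝ) ^ d) z w ≤ ((X.adjMatrix ℝ) ^ d) u v ∧
        (((X.adjMatrix ℝ) ^ d) z w = ((X.adjMatrix ℝ) ^ d) u v ↔ PST X z w τ) := by
  intro z w hzw
  obtain ⟨s, hs⟩ := hspec.exists_norm_exp_adjMatrix_apply_eq τ
  have huv_one : (X.adjMatrix ℝ ^ d) u v * s = 1 := (hs u v huv).symm.trans hpst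
  have hs_pos : 0 < s :=
    pos_of_mul_pos_right (huv_one ▸ one_pos) (X.adjMatrix_pow_apply_nonneg d u v)
  have hzw_le : (X.adjMatrix ℝ ^ d) z w * s ≤ 1 :=
    hs z w hzw ▸ entry_norm_bound_of_unitary
      ((X.isHermitian_adjMatrix (R := ℂ)).exp_I_mul_smul_mem_unitaryGroup τ) w z
  refine ⟨le_of_mul_le_mul_right (huv_one ▸ hzw_le) hs_pos, ?_⟩
  rw [PST, hs z w hzw, ← huv_one, mul_left_inj' hs_pos.ne']

/-- Suppose `X` has diameter `d`, exactly `d+1` distinct eigenvalues, and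
admits perfect state transfer at time `τ` between `u` and `v` at distance `d`. Then for all
`z, w` at distance `d`, `(A^d)_zw ≤ (A^d)_uv`, with equality iff `X` admits perfect state
transfer between `z` and `w` at time `τ`. -/
theorem stmt_17 (X : SimpleGraph V) [DecidableRel X.Adj] (hconn : X.Connected)
    (d : ℕ) (hdiam : ∀ w z : V, X.dist w z ≤ d) (hdiam' : ∃ w z : V, X.dist w z = d)
    (θ : Fin (d + 1) → ℝ) (E : Fin (d + 1) → Matrix V V ℝ)
    (hspec : SpectralDecomp X d θ E)
    (u v : V) (huv : X.dist u v = d) (τ : ℝ) (hτ : 0 < τ) (hpst : PST X u v τ) :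
    ∀ z w : V, X.dist z w = d →
      ((X.adjMatrix ℝ) ^ d) z w ≤ ((X.adjMatrix ℝ) ^ d) u v ∧
        (((X.adjMatrix ℝ) ^ d) z w = ((X.adjMatrix ℝ) ^ d) u v ↔ PST X z w τ) :=
  stmt_17_general X d θ E hspec u v huv τ hpst
end
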